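/- arXiv:1108.4386 — 5 statements merged into one kernel-verified Lean document; each statement's English description precedes it below -/
import Mathlib

section
/- Additive Drift Theorem for stopping sums: Let X_1, X_2, … be random variables with bounded support and let T = min{t : X_1 + … + X_t ≥ g} for a given g > 0. If E(T) exists and E(X_i | T ≥ i) ≤ u for all i ∈ ℕ, then E(T) ≥ g/u. -/
/-!
Summing the increments up to time `T` and exchanging sum and expectation (legitimate because the
increments are bounded and `E T < ∞`) gives `E (X 1 + ⋯ + X T) = ∑ i ≥ 1, E (X i; T ≥ i)`.
The drift bound turns the right-hand side into at most `u ∑ i ≥ 1, P (T ≥ i) = u E T`, while the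
left-hand side is at least `g` because the partial sums have reached `g` at time `T`.
-/

open MeasureTheory Finset
open scoped ENNReal

lemma sum_Icc_one_eq_sum_range_succ {M : Type*} [AddCommMonoid M] (f : ℕ → M) (n : ℕ) :
    ∑ i ∈ Icc 1 n, f i = ∑ i ∈ range n, f (i + 1) := by
  induction n with
  | zero => simp
  | succ n ih => rw [sum_Icc_succ_top (by omega), ih, sum_range_succ]

lemma tsum_indicator_lt_eq_sum_range {Ω E : Type*} [AddCommMonoid E] [TopologicalSpace E]
    (Y : ℕ → Ω → E) (T : Ω → ℕ) (ω : Ω) :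
    ∑' i, {ω | i < T ω}.indicator (Y i) ω = ∑ i ∈ range (T ω), Y i ω := by
  rw [tsum_eq_sum (s := range (T ω)) fun i hi ↦ Set.indicator_of_notMem (by simpa using hi) _]
  exact sum_congr rfl fun i hi ↦ Set.indicator_of_mem (by simpa using hi) _

section

variable {Ω : Type*} [MeasurableSpace Ω] {μ : Measure Ω} {T : Ω → ℕ}

lemma AEMeasurable.nullMeasurableSet_setOf_lt (hT : AEMeasurable T μ) (i : ℕ) :
    NullMeasurableSet {ω | i < T ω} μ :=
  hT.nullMeasurableSet_preimage measurableSet_Ioi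

lemma aemeasurable_of_integrable_natCast (hT : Integrable (fun ω ↦ (T ω : ℝ)) μ) :
    AEMeasurable T μ := by
  refine (Nat.measurable_floor.comp_aemeasurable hT.aemeasurable).congr (ae_of_all _ fun ω ↦ ?_)
  simp

lemma lintegral_natCast_eq_tsum_measure_lt (hT : AEMeasurable T μ) :
    ∫⁻ ω, (T ω : ℝ≥0∞) ∂μ = ∑' i, μ {ω | i < T ω} := by
  have hs := hT.nullMeasurableSet_setOf_lt
  calc ∫⁻ ω, (T ω : ℝ≥0∞) ∂μ = ∫⁻ ω, ∑' i, {ω | i < T ω}.indicator (fun _ ↦ 1) ω ∂μ := by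
        simp [tsum_indicator_lt_eq_sum_range]
    _ = ∑' i, μ {ω | i < T ω} := by
        rw [lintegral_tsum fun i ↦ aemeasurable_const.indicator₀ (hs i)]
        simp only [lintegral_indicator_const₀ (hs _), one_mul]

lemma tsum_measure_lt_ne_top (hT : Integrable (fun ω ↦ (T ω : ℝ)) μ) :
    ∑' i, μ {ω | i < T ω} ≠ ⊤ := by
  rw [← lintegral_natCast_eq_tsum_measure_lt (aemeasurable_of_integrable_natCast hT)]
  simpa using hT.lintegral_lt_top.ne

lemma hasSum_measureReal_lt_integral_natCast (hT : Integrable (fun ω ↦ (T ω : ℝ)) μ) :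
    HasSum (fun i ↦ μ.real {ω | i < T ω}) (∫ ω, (T ω : ℝ) ∂μ) := by
  have hlayer := lintegral_natCast_eq_tsum_measure_lt (aemeasurable_of_integrable_natCast hT)
  have hfin := tsum_measure_lt_ne_top hT
  have hint : ∫ ω, (T ω : ℝ) ∂μ = (∑' i, μ {ω | i < T ω}).toReal := by
    rw [integral_eq_lintegral_of_nonneg_ae (ae_of_all _ fun ω ↦ by positivity) hT.1, ← hlayer]
    simp
  rw [hint, ENNReal.tsum_toReal_eq (ENNReal.ne_top_of_tsum_ne_top hfin)]
  exact ENNReal.hasSum_toReal hfin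

variable {E : Type*} [NormedAddCommGroup E] {Y : ℕ → Ω → E} {C : ℝ}

lemma integrable_sum_range_of_norm_le [CompleteSpace E] (hY : ∀ i, AEStronglyMeasurable (Y i) μ)
    (hYC : ∀ i ω, ‖Y i ω‖ ≤ C) (hT : Integrable (fun ω ↦ (T ω : ℝ)) μ) :
    Integrable (fun ω ↦ ∑ i ∈ range (T ω), Y i ω) μ := by
  have hs := (aemeasurable_of_integrable_natCast hT).nullMeasurableSet_setOf_lt
  have hmeas : AEStronglyMeasurable (fun ω ↦ ∑ i ∈ range (T ω), Y i ω) μ := by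
    simp_rw [← tsum_indicator_lt_eq_sum_range]
    exact AEStronglyMeasurable.tsum fun i ↦ (hY i).indicator₀ (hs i)
  refine (hT.mul_const C).mono' hmeas (ae_of_all _ fun ω ↦ ?_)
  simpa using norm_sum_le_of_le (range (T ω)) fun i _ ↦ hYC i ω

theorem hasSum_setIntegral_lt_integral_sum_range [NormedSpace ℝ E]
    (hY : ∀ i, AEStronglyMeasurable (Y i) μ) (hYC : ∀ i ω, ‖Y i ω‖ ≤ C)
    (hT : Integrable (fun ω ↦ (T ω : ℝ)) μ) :
    HasSum (fun i ↦ ∫ ω in {ω | i < T ω}, Y i ω ∂μ) (∫ ω, ∑ i ∈ range (T ω), Y i ω ∂μ) := by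
  have hs := (aemeasurable_of_integrable_natCast hT).nullMeasurableSet_setOf_lt
  have hμ i : μ {ω | i < T ω} < ⊤ :=
    (ENNReal.ne_top_of_tsum_ne_top (tsum_measure_lt_ne_top hT) i).lt_top
  set F : ℕ → Ω → E := fun i ↦ {ω | i < T ω}.indicator (Y i)
  have hF_int i : Integrable (F i) μ :=
    (Measure.integrableOn_of_bounded (hμ i).ne (hY i) (ae_of_all _ (hYC i))).integrable_indicator₀
      (hs i)
  have hF_norm i : ∫ ω, ‖F i ω‖ ∂μ ≤ C * μ.real {ω | i < T ω} := by
    calc ∫ ω, ‖F i ω‖ ∂μ = ‖∫ ω in {ω | i < T ω}, ‖Y i ω‖ ∂μ‖ := by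
          rw [Real.norm_of_nonneg (integral_nonneg fun _ ↦ norm_nonneg _),
            ← integral_indicator₀ (hs i)]
          simp_rw [F, norm_indicator_eq_indicator_norm]
      _ ≤ C * μ.real {ω | i < T ω} :=
          norm_setIntegral_le_of_norm_le_const (hμ i) fun ω _ ↦ by simpa using hYC i ω
  have hF_sum : Summable fun i ↦ ∫ ω, ‖F i ω‖ ∂μ :=
    Summable.of_nonneg_of_le (fun i ↦ integral_nonneg fun _ ↦ norm_nonneg _) hF_norm
      ((hasSum_measureReal_lt_integral_natCast hT).summable.mul_left C)
  simpa only [F, integral_indicator₀ (hs _), tsum_indicator_lt_eq_sum_range] using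
    hasSum_integral_of_summable_integral_norm hF_int hF_sum

end

theorem additive_drift_stopping_sums_general
    {Ω : Type*} [MeasurableSpace Ω] (μ : Measure Ω) [IsProbabilityMeasure μ]
    (X : ℕ → Ω → ℝ) (hmeas : ∀ i, Measurable (X i))
    (C : ℝ) (hbdd : ∀ i ω, |X i ω| ≤ C)
    (g u : ℝ) (hu : 0 < u)
    (T : Ω → ℕ)
    (hT : ∀ ω, g ≤ ∑ i ∈ Finset.Icc 1 (T ω), X i ω ∧
      ∀ t < T ω, ∑ i ∈ Finset.Icc 1 t, X i ω < g)
    (hTint : Integrable (fun ω => (T ω : ℝ)) μ)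
    (hcond : ∀ i : ℕ, 1 ≤ i →
      (∫ ω in {ω | i ≤ T ω}, X i ω ∂μ) ≤ u * (μ {ω | i ≤ T ω}).toReal) :
    g / u ≤ ∫ ω, (T ω : ℝ) ∂μ := by
  have hX i : AEStronglyMeasurable (X (i + 1)) μ := (hmeas _).aestronglyMeasurable
  have hXC i ω : ‖X (i + 1) ω‖ ≤ C := (Real.norm_eq_abs _).trans_le (hbdd _ ω)
  -- `hcond (i + 1)` applies as is: `i < T ω` unfolds to `i + 1 ≤ T ω`, `μ.real` to `(μ ·).toReal`.
  have hdrift : ∫ ω, ∑ i ∈ range (T ω), X (i + 1) ω ∂μ ≤ u * ∫ ω, (T ω : ℝ) ∂μ :=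
    hasSum_le (fun i ↦ hcond (i + 1) i.succ_pos)
      (hasSum_setIntegral_lt_integral_sum_range hX hXC hTint)
      ((hasSum_measureReal_lt_integral_natCast hTint).mul_left u)
  have hreach : g ≤ ∫ ω, ∑ i ∈ range (T ω), X (i + 1) ω ∂μ := by
    calc g = ∫ _, g ∂μ := by simp
      _ ≤ _ := integral_mono (integrable_const g) (integrable_sum_range_of_norm_le hX hXC hTint)
          fun ω ↦ sum_Icc_one_eq_sum_range_succ (X · ω) (T ω) ▸ (hT ω).1
  rw [div_le_iff₀ hu]
  linarith

/-- Additive drift theorem for stopping sums: if `T` is the first time the partial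
sums `X 1 + ⋯ + X t` reach `g > 0`, the variables have bounded support,
`E T` exists, and `E(X i ∣ T ≥ i) ≤ u`, then `E T ≥ g / u`. -/
theorem additive_drift_stopping_sums
    {Ω : Type*} [MeasurableSpace Ω] (μ : Measure Ω) [IsProbabilityMeasure μ]
    (X : ℕ → Ω → ℝ) (hmeas : ∀ i, Measurable (X i))
    (C : ℝ) (hbdd : ∀ i ω, |X i ω| ≤ C)
    (g u : ℝ) (hg : 0 < g) (hu : 0 < u)
    (T : Ω → ℕ)
    (hT : ∀ ω, g ≤ ∑ i ∈ Finset.Icc 1 (T ω), X i ω ∧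
      ∀ t < T ω, ∑ i ∈ Finset.Icc 1 t, X i ω < g)
    (hTint : Integrable (fun ω => (T ω : ℝ)) μ)
    (hcond : ∀ i : ℕ, 1 ≤ i →
      (∫ ω in {ω | i ≤ T ω}, X i ω ∂μ) ≤ u * (μ {ω | i ≤ T ω}).toReal) :
    g / u ≤ ∫ ω, (T ω : ℝ) ∂μ :=
  additive_drift_stopping_sums_general μ X hmeas C hbdd g u hu T hT hTint hcond
end

section
/- Mutation monotonicity lemma: Let a, b ∈ {0,1}^n with |a|_1 < |b|_1, where |x|_1 denotes the number of one-bits. Let mut(x) denote the random string obtained by flipping each bit of x independently with probability p. If p ≤ 1/2, then for every 0 ≤ j ≤ n, P(|mut(a)|_1 ≤ j) ≥ P(|mut(b)|_1 ≤ j). -/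
/-!
Coordinate permutations preserve the law of `|mut(x)|₁`, so `P(|mut(x)|₁ ≤ j)` depends only on
`|x|₁`, and it suffices to turn one zero bit `i` of `x` into a one. Flipping bit `i` of the outcome
couples `mut(flipBit i x)` with `mut(x)`; the only outcomes whose membership in `{|y|₁ ≤ j}` changes
under this flip are pairs `y`, `flipBit i y` with `y i = false`, and among them `x` reaches `y` with
weight proportional to `1 - p` and `flipBit i y` with weight proportional to `p ≤ 1 - p`.
-/

open scoped BigOperators

/-- Number of one-bits of a bit string. -/
def oneCount {n : ℕ} (x : Fin n → Bool) : ℕ :=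
  (Finset.univ.filter fun i => x i = true).card

/-- Hamming distance between two bit strings. -/
def hamDist {n : ℕ} (x y : Fin n → Bool) : ℕ :=
  (Finset.univ.filter fun i => x i ≠ y i).card

/-- Probability that standard bit-flip mutation with mutation probability `p`
turns `x` into `y`. -/
noncomputable def mutP {n : ℕ} (p : ℝ) (x y : Fin n → Bool) : ℝ :=
  p ^ hamDist x y * (1 - p) ^ (n - hamDist x y)

open Finset Function

theorem Function.Involutive.sum_filter_comp_le {α M : Type*} [Fintype α] [AddCommMonoid M]
    [LinearOrder M] [IsOrderedCancelAddMonoid M] {τ : α → α} (hτ : Involutive τ)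
    (P : α → Prop) [DecidablePred P] (f : α → M) (h : ∀ y, P y → ¬P (τ y) → f (τ y) ≤ f y) :
    ∑ y with P y, f (τ y) ≤ ∑ y with P y, f y := by
  -- Averaging each sum with its reindexing along `τ` makes the comparison pointwise on `{y, τ y}`.
  have double (g : α → M) :
      2 • ∑ y with P y, g y = ∑ y, ((if P y then g y else 0) + if P (τ y) then g (τ y) else 0) := by
    have reindex := Equiv.sum_comp (hτ.toPerm τ) (fun y => if P y then g y else 0)
    rw [coe_toPerm] at reindex
    rw [sum_add_distrib, reindex, sum_filter, two_nsmul]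
  rw [← nsmul_le_nsmul_iff_right two_ne_zero, double, double]
  refine sum_le_sum fun y _ => ?_
  rw [hτ y]
  by_cases hy : P y <;> by_cases hτy : P (τ y) <;> simp only [hy, hτy, if_true, if_false]
  · rw [add_comm]
  · simpa only [add_zero] using h y hy hτy
  · simpa only [zero_add, hτ y] using h (τ y) hτy (by rwa [hτ y])
  · rfl

section

variable {n : ℕ}

def flipBit (i : Fin n) (y : Fin n → Bool) : Fin n → Bool :=
  update y i (!y i)

theorem flipBit_involutive (i : Fin n) : Involutive (flipBit i) := by
  intro y
  funext k
  rcases eq_or_ne k i with rfl | hk <;> simp_all [flipBit]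

@[simp]
theorem flipBit_apply_self (i : Fin n) (y : Fin n → Bool) : flipBit i y i = !y i := by
  simp [flipBit]

theorem hamDist_le (x y : Fin n → Bool) : hamDist x y ≤ n :=
  (card_le_univ _).trans_eq (Fintype.card_fin n)

theorem hamDist_flipBit_left (i : Fin n) (x y : Fin n → Bool) :
    hamDist (flipBit i x) y = hamDist x (flipBit i y) := by
  unfold hamDist
  congr 1
  refine filter_congr fun k _ => ?_
  rcases eq_or_ne k i with rfl | hk
  · cases hx : x k <;> cases hy : y k <;> simp [flipBit, hx, hy]
  · simp [flipBit, hk]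

theorem hamDist_flipBit_of_eq {x y : Fin n → Bool} {i : Fin n} (h : x i = y i) :
    hamDist x (flipBit i y) = hamDist x y + 1 := by
  unfold hamDist
  have hfilter : (univ.filter fun k => x k ≠ flipBit i y k) =
      insert i (univ.filter fun k => x k ≠ y k) := by
    ext k
    simp only [mem_filter, mem_insert, mem_univ, true_and]
    rcases eq_or_ne k i with rfl | hk
    · simp [flipBit, h]
    · simp [flipBit, hk]
  rw [hfilter, card_insert_of_notMem (by simp [h])]

theorem oneCount_eq_hamDist (y : Fin n → Bool) : oneCount y = hamDist (fun _ => false) y := by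
  unfold oneCount hamDist
  congr 1
  exact filter_congr fun k _ => by cases y k <;> simp

theorem oneCount_flipBit_of_false {y : Fin n → Bool} {i : Fin n} (h : y i = false) :
    oneCount (flipBit i y) = oneCount y + 1 := by
  rw [oneCount_eq_hamDist, oneCount_eq_hamDist, hamDist_flipBit_of_eq h.symm]

theorem oneCount_flipBit_of_true {y : Fin n → Bool} {i : Fin n} (h : y i = true) :
    oneCount y = oneCount (flipBit i y) + 1 := by
  conv_lhs => rw [← flipBit_involutive i y]
  exact oneCount_flipBit_of_false (by simp [h])

theorem oneCount_comp_perm (σ : Equiv.Perm (Fin n)) (x : Fin n → Bool) :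
    oneCount (x ∘ σ) = oneCount x :=
  card_equiv σ (by simp)

theorem hamDist_comp_perm (σ : Equiv.Perm (Fin n)) (x y : Fin n → Bool) :
    hamDist (x ∘ σ) (y ∘ σ) = hamDist x y :=
  card_equiv σ (by simp)

theorem exists_perm_comp_eq_of_oneCount_eq {x y : Fin n → Bool} (h : oneCount x = oneCount y) :
    ∃ σ : Equiv.Perm (Fin n), y ∘ σ = x := by
  obtain ⟨σ, hσ⟩ := Equiv.Perm.exists_map_finset_eq _ _ h
  refine ⟨σ, funext fun k => Bool.eq_iff_iff.2 ?_⟩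
  have hk : σ k ∈ ({k | x k = true} : Finset (Fin n)).map σ.toEmbedding ↔ x k = true := by simp
  rw [hσ] at hk
  simpa using hk

theorem mutP_comp_perm (p : ℝ) (σ : Equiv.Perm (Fin n)) (x y : Fin n → Bool) :
    mutP p (x ∘ σ) (y ∘ σ) = mutP p x y := by
  simp only [mutP, hamDist_comp_perm]

theorem mutP_flipBit_left (p : ℝ) (i : Fin n) (x y : Fin n → Bool) :
    mutP p (flipBit i x) y = mutP p x (flipBit i y) := by
  simp only [mutP, hamDist_flipBit_left]

theorem mutP_flipBit_le_of_eq {p : ℝ} (hp0 : 0 ≤ p) (hp : p ≤ 1 / 2) {x y : Fin n → Bool}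
    {i : Fin n} (h : x i = y i) : mutP p x (flipBit i y) ≤ mutP p x y := by
  have hsucc := hamDist_flipBit_of_eq h
  have hle := hamDist_le x (flipBit i y)
  unfold mutP
  rw [hsucc]
  obtain ⟨m, hm⟩ : ∃ m, n - hamDist x y = m + 1 := ⟨n - (hamDist x y + 1), by omega⟩
  rw [hm, show n - (hamDist x y + 1) = m by omega, pow_succ, pow_succ]
  have hq : 0 ≤ 1 - p := by linarith
  calc p ^ hamDist x y * p * (1 - p) ^ m
      ≤ p ^ hamDist x y * (1 - p) * (1 - p) ^ m := by gcongr; linarith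
    _ = p ^ hamDist x y * ((1 - p) ^ m * (1 - p)) := by ring

noncomputable def mutCdf (p : ℝ) (x : Fin n → Bool) (j : ℕ) : ℝ :=
  ∑ y ∈ Finset.univ.filter (fun y : Fin n → Bool => oneCount y ≤ j), mutP p x y

theorem mutCdf_comp_perm (p : ℝ) (σ : Equiv.Perm (Fin n)) (x : Fin n → Bool) (j : ℕ) :
    mutCdf p (x ∘ σ) j = mutCdf p x j := by
  have hcomp (y : Fin n → Bool) : σ.symm.arrowCongr (Equiv.refl Bool) y = y ∘ σ := rfl
  refine (sum_equiv (σ.symm.arrowCongr (Equiv.refl Bool)) (fun y => ?_) fun y _ => ?_).symm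
  · simp only [mem_filter, mem_univ, true_and, hcomp, oneCount_comp_perm]
  · rw [hcomp, mutP_comp_perm]

theorem mutCdf_eq_of_oneCount_eq (p : ℝ) {x y : Fin n → Bool} (h : oneCount x = oneCount y)
    (j : ℕ) : mutCdf p x j = mutCdf p y j := by
  obtain ⟨σ, rfl⟩ := exists_perm_comp_eq_of_oneCount_eq h
  exact mutCdf_comp_perm p σ y j

theorem mutCdf_flipBit_le {p : ℝ} (hp0 : 0 ≤ p) (hp : p ≤ 1 / 2) {x : Fin n → Bool} {i : Fin n}
    (hx : x i = false) (j : ℕ) : mutCdf p (flipBit i x) j ≤ mutCdf p x j := by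
  simp only [mutCdf, mutP_flipBit_left]
  refine (flipBit_involutive i).sum_filter_comp_le _ _ fun y hy hflip => ?_
  have hyi : y i = false := by
    by_contra hyi
    have := oneCount_flipBit_of_true (Bool.eq_true_of_not_eq_false hyi)
    omega
  exact mutP_flipBit_le_of_eq hp0 hp (hx.trans hyi.symm)

theorem mutCdf_le_of_oneCount_le {p : ℝ} (hp0 : 0 ≤ p) (hp : p ≤ 1 / 2) {a b : Fin n → Bool}
    (hab : oneCount a ≤ oneCount b) (j : ℕ) : mutCdf p b j ≤ mutCdf p a j := by
  obtain ⟨m, hm⟩ := Nat.exists_eq_add_of_le hab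
  clear hab
  induction m generalizing b with
  | zero => exact (mutCdf_eq_of_oneCount_eq p hm j).le
  | succ m ih =>
    obtain ⟨i, hi⟩ : ∃ i, b i = true := by
      obtain ⟨i, hi⟩ := card_pos.1 (show 0 < oneCount b by omega)
      exact ⟨i, (mem_filter.1 hi).2⟩
    have hcount := oneCount_flipBit_of_true hi
    calc mutCdf p b j = mutCdf p (flipBit i (flipBit i b)) j := by rw [flipBit_involutive]
      _ ≤ mutCdf p (flipBit i b) j := mutCdf_flipBit_le hp0 hp (by simp [hi]) j
      _ ≤ mutCdf p a j := ih (by omega)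

end

theorem mutation_monotonicity_general {n : ℕ} (p : ℝ) (hp : 0 < p) (hp2 : p ≤ 1 / 2)
    (a b : Fin n → Bool) (hab : oneCount a < oneCount b) (j : ℕ) :
    ∑ y ∈ Finset.univ.filter (fun y : Fin n → Bool => oneCount y ≤ j), mutP p b y ≤
      ∑ y ∈ Finset.univ.filter (fun y : Fin n → Bool => oneCount y ≤ j), mutP p a y :=
  mutCdf_le_of_oneCount_le hp.le hp2 hab.le j

/-- Mutation monotonicity: if `a` has fewer one-bits than `b` and `p ≤ 1/2`, then
`P(|mut(a)|₁ ≤ j) ≥ P(|mut(b)|₁ ≤ j)` for every `j`. -/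
theorem mutation_monotonicity {n : ℕ} (p : ℝ) (hp : 0 < p) (hp2 : p ≤ 1 / 2)
    (a b : Fin n → Bool) (hab : oneCount a < oneCount b) (j : ℕ) (hj : j ≤ n) :
    ∑ y ∈ Finset.univ.filter (fun y : Fin n → Bool => oneCount y ≤ j), mutP p b y ≤
      ∑ y ∈ Finset.univ.filter (fun y : Fin n → Bool => oneCount y ≤ j), mutP p a y :=
  mutation_monotonicity_general p hp hp2 a b hab j
end

section
/- Expected progress upper bound on OneMax: Consider the (1+1) EA with mutation probability p minimizing OneMax. If the current search point has i one-bits and I' denotes the number of one-bits of the subsequent search point (after elitist selection, so I' ≤ i), then E(i − I') ≤ i·p·(1 − p + i·p²/(1−p))^{n−i}. -/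
open scoped BigOperators

open Finset

/-!
Parametrise the offspring `y` of `x` by the set `A` of flipped one-bits and the set `B` of
flipped zero-bits: then `mutP p x y = p^(|A|+|B|) (1-p)^(n-|A|-|B|)` and the loss is
`(|A| - |B|)⁺`, so the expectation factorises into a binomial sum over `|B| ~ Bin(n-i, p)` of
`E (|A| - b)⁺` with `|A| ~ Bin(i, p)`. Bounding `(a - b)⁺ ≤ a · [a > b]` and using
`a C(i,a) = i C(i-1,a-1)` together with the union bound `P(Bin(m, p) ≥ b) ≤ C(m, b) p^b` gives
`E (|A| - b)⁺ ≤ i p (i p)^b`, and the binomial theorem then sums this to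
`i p (1 - p + i p²)^(n-i)`, which is at most the claimed bound.
-/

theorem sum_Icc_choose_mul_pow_mul_pow_le {p : ℝ} (hp0 : 0 ≤ p) (hp1 : p ≤ 1) (m b : ℕ) :
    ∑ a ∈ Icc b m, (m.choose a : ℝ) * p ^ a * (1 - p) ^ (m - a) ≤ m.choose b * p ^ b := by
  rcases lt_or_ge m b with hmb | hbm
  · rw [Icc_eq_empty_of_lt hmb, sum_empty]
    positivity
  have hterm : ∀ c ∈ range (m - b + 1),
      (m.choose (b + c) : ℝ) * p ^ (b + c) * (1 - p) ^ (m - (b + c)) ≤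
        m.choose b * p ^ b * ((m - b).choose c * p ^ c * (1 - p) ^ (m - b - c)) := by
    intro c _
    have hchoose : m.choose (b + c) ≤ m.choose b * (m - b).choose c :=
      calc m.choose (b + c) ≤ m.choose (b + c) * (b + c).choose b :=
            Nat.le_mul_of_pos_right _ (Nat.choose_pos (Nat.le_add_right b c))
        _ = m.choose b * (m - b).choose c := by
            rw [Nat.choose_mul (Nat.le_add_right b c), Nat.add_sub_cancel_left]
    rw [show m - (b + c) = m - b - c by omega, pow_add]
    calc (m.choose (b + c) : ℝ) * (p ^ b * p ^ c) * (1 - p) ^ (m - b - c)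
        = m.choose (b + c) * (p ^ b * p ^ c * (1 - p) ^ (m - b - c)) := by ring
      _ ≤ (m.choose b * (m - b).choose c : ℕ) * (p ^ b * p ^ c * (1 - p) ^ (m - b - c)) := by
        gcongr
      _ = _ := by push_cast; ring
  calc ∑ a ∈ Icc b m, (m.choose a : ℝ) * p ^ a * (1 - p) ^ (m - a)
      = ∑ c ∈ range (m - b + 1),
          (m.choose (b + c) : ℝ) * p ^ (b + c) * (1 - p) ^ (m - (b + c)) := by
        rw [← Ico_add_one_right_eq_Icc, sum_Ico_eq_sum_range, show m + 1 - b = m - b + 1 by omega]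
    _ ≤ ∑ c ∈ range (m - b + 1),
          m.choose b * p ^ b * ((m - b).choose c * p ^ c * (1 - p) ^ (m - b - c)) :=
        sum_le_sum hterm
    _ = m.choose b * p ^ b * (p + (1 - p)) ^ (m - b) := by
        rw [← mul_sum, add_pow]
        exact congrArg _ (sum_congr rfl fun _ _ => by ring)
    _ = m.choose b * p ^ b := by simp

/-- For `a = c + 1 > b` the `a`-th term is at most
`a C(m, a) p^a (1-p)^(m-a) = m p · C(m-1, c) p^c (1-p)^(m-1-c)`,
so the sum is at most `m p` times a binomial tail. -/
theorem sum_choose_mul_pow_mul_pow_mul_tsub_le {p : ℝ} (hp0 : 0 ≤ p) (hp1 : p ≤ 1)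
    (m b : ℕ) :
    ∑ a ∈ range (m + 1),
        (m.choose a : ℝ) * (p ^ a * (1 - p) ^ (m - a) * ((a - b : ℕ) : ℝ)) ≤
      m * p * (m * p) ^ b := by
  rcases m with _ | k
  · simp
  have hterm : ∀ c ∈ Icc b k,
      ((k + 1).choose (c + 1) : ℝ) *
          (p ^ (c + 1) * (1 - p) ^ (k - c) * ((c + 1 - b : ℕ) : ℝ)) ≤
        (k + 1) * p * (k.choose c * p ^ c * (1 - p) ^ (k - c)) := by
    intro c _
    have hpascal : ((k + 1).choose (c + 1) : ℝ) * (c + 1) = (k + 1) * k.choose c := by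
      exact_mod_cast (Nat.add_one_mul_choose_eq k c).symm
    calc _ ≤ ((k + 1).choose (c + 1) : ℝ) * (p ^ (c + 1) * (1 - p) ^ (k - c) * (c + 1)) := by
          gcongr
          exact_mod_cast Nat.sub_le (c + 1) b
      _ = (k + 1) * p * (k.choose c * p ^ c * (1 - p) ^ (k - c)) := by
          linear_combination p ^ (c + 1) * (1 - p) ^ (k - c) * hpascal
  have hchoose : (k.choose b : ℝ) ≤ (k + 1) ^ b := by
    exact_mod_cast (Nat.choose_le_pow k b).trans (Nat.pow_le_pow_left k.le_succ b)
  have hsub : Icc b k ⊆ range (k + 1) := fun c hc => by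
    rw [mem_Icc] at hc
    rw [mem_range]
    omega
  rw [sum_range_succ', ← sum_subset hsub fun c hck hc => ?_]
  · simp only [Nat.add_sub_add_right]
    calc _ ≤ ∑ c ∈ Icc b k, (k + 1) * p * (k.choose c * p ^ c * (1 - p) ^ (k - c)) := by
          simpa using sum_le_sum hterm
      _ ≤ (k + 1) * p * (k.choose b * p ^ b) := by
          rw [← mul_sum]
          gcongr
          exact sum_Icc_choose_mul_pow_mul_pow_le hp0 hp1 k b
      _ ≤ ((k + 1 : ℕ) : ℝ) * p * (((k + 1 : ℕ) : ℝ) * p) ^ b := by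
          rw [mul_pow]
          push_cast
          gcongr
  · rw [mem_range] at hck
    rw [mem_Icc] at hc
    simp [show c + 1 - b = 0 by omega]

theorem Finset.sum_inter_sdiff_eq_sum_powerset_sum_powerset {α M : Type*} [Fintype α]
    [DecidableEq α] [AddCommMonoid M] (s : Finset α) (f : Finset α → Finset α → M) :
    ∑ D, f (D ∩ s) (D \ s) = ∑ A ∈ s.powerset, ∑ B ∈ sᶜ.powerset, f A B := by
  rw [← sum_product']
  refine sum_nbij' (fun D => (D ∩ s, D \ s)) (fun z => z.1 ∪ z.2) ?_ ?_ ?_ ?_ ?_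
  · intro D _
    simp [subset_compl_iff_disjoint_right, sdiff_disjoint]
  · simp
  · intro D _
    exact sup_inf_sdiff D s
  · rintro ⟨A, B⟩ h
    rw [mem_product, mem_powerset, mem_powerset, subset_compl_iff_disjoint_right] at h
    simp [union_inter_distrib_right, inter_eq_left.2 h.1, disjoint_iff_inter_eq_empty.1 h.2,
      union_sdiff_distrib, sdiff_eq_empty_iff_subset.2 h.1, h.2.sdiff_eq_left]
  · simp

section BitStrings

variable {n : ℕ}

def ones (x : Fin n → Bool) : Finset (Fin n) := {j | x j = true}

theorem oneCount_eq_card_ones (x : Fin n → Bool) : oneCount x = #(ones x) := rfl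

def flipAt (x : Fin n → Bool) (D : Finset (Fin n)) : Fin n → Bool :=
  fun j => if j ∈ D then !x j else x j

def flipAtEquiv (x : Fin n → Bool) : Finset (Fin n) ≃ (Fin n → Bool) where
  toFun := flipAt x
  invFun y := {j | x j ≠ y j}
  left_inv D := by
    ext j
    by_cases hj : j ∈ D <;> simp [flipAt, hj]
  right_inv y := by
    funext j
    simp only [flipAt, mem_filter, mem_univ, true_and]
    cases x j <;> cases y j <;> rfl

theorem hamDist_flipAt (x : Fin n → Bool) (D : Finset (Fin n)) : hamDist x (flipAt x D) = #D := by
  unfold hamDist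
  congr 1
  ext j
  by_cases hj : j ∈ D <;> simp [flipAt, hj]

theorem oneCount_flipAt_add (x : Fin n → Bool) (D : Finset (Fin n)) :
    oneCount (flipAt x D) + #(D ∩ ones x) = oneCount x + #(D \ ones x) := by
  have hones : ones (flipAt x D) = (ones x \ D) ∪ (D \ ones x) := by
    ext j
    by_cases hj : j ∈ D <;> simp [ones, flipAt, hj]
  rw [oneCount_eq_card_ones, oneCount_eq_card_ones, hones,
    card_union_of_disjoint disjoint_sdiff_sdiff, inter_comm, add_right_comm,
    card_sdiff_add_card_inter]

theorem oneCount_sub_min_oneCount_flipAt (x : Fin n → Bool) (D : Finset (Fin n)) :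
    (oneCount x : ℝ) - (min (oneCount x) (oneCount (flipAt x D)) : ℕ) =
      (#(D ∩ ones x) - #(D \ ones x) : ℕ) := by
  have hcount := oneCount_flipAt_add x D
  have hle : #(D ∩ ones x) ≤ oneCount x := card_le_card inter_subset_right
  rw [show min (oneCount x) (oneCount (flipAt x D)) =
      oneCount x - (#(D ∩ ones x) - #(D \ ones x)) by omega, Nat.cast_sub (by omega)]
  ring

theorem sum_mutP_mul_oneCount_sub_min_eq (p : ℝ) (x : Fin n → Bool) :
    ∑ y, mutP p x y * ((oneCount x : ℝ) - (min (oneCount x) (oneCount y) : ℕ)) =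
      ∑ B ∈ (ones x)ᶜ.powerset, p ^ #B * (1 - p) ^ (#(ones x)ᶜ - #B) *
        ∑ A ∈ (ones x).powerset,
          p ^ #A * (1 - p) ^ (#(ones x) - #A) * ((#A - #B : ℕ) : ℝ) := by
  have hcompl : #(ones x)ᶜ + #(ones x) = n := by
    rw [card_compl_add_card, Fintype.card_fin]
  calc ∑ y, mutP p x y * ((oneCount x : ℝ) - (min (oneCount x) (oneCount y) : ℕ))
      = ∑ D : Finset (Fin n), p ^ (#(D ∩ ones x) + #(D \ ones x)) *
          (1 - p) ^ (n - (#(D ∩ ones x) + #(D \ ones x))) *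
            ((#(D ∩ ones x) - #(D \ ones x) : ℕ) : ℝ) := by
        rw [← (flipAtEquiv x).sum_comp]
        refine sum_congr rfl fun D _ => ?_
        rw [card_inter_add_card_sdiff, ← oneCount_sub_min_oneCount_flipAt x D,
          ← hamDist_flipAt x D]
        rfl
    _ = ∑ A ∈ (ones x).powerset, ∑ B ∈ (ones x)ᶜ.powerset,
          p ^ (#A + #B) * (1 - p) ^ (n - (#A + #B)) * ((#A - #B : ℕ) : ℝ) :=
        sum_inter_sdiff_eq_sum_powerset_sum_powerset (ones x)
          fun A B => p ^ (#A + #B) * (1 - p) ^ (n - (#A + #B)) * ((#A - #B : ℕ) : ℝ)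
    _ = _ := by
        rw [sum_comm]
        refine sum_congr rfl fun B hB => ?_
        rw [mul_sum]
        refine sum_congr rfl fun A hA => ?_
        have hA := card_le_card (mem_powerset.1 hA)
        have hB := card_le_card (mem_powerset.1 hB)
        rw [show n - (#A + #B) = (#(ones x) - #A) + (#(ones x)ᶜ - #B) by omega, pow_add,
          pow_add]
        ring

end BitStrings

/-- Expected progress of the (1+1) EA on OneMax: from a point `x` with
`i = oneCount x` one-bits, writing `I'` for the number of one-bits after one
mutation-selection step (so `I' = min i |mut x|₁` under elitist selection),
`E(i − I') ≤ i p (1 − p + i p² / (1 − p))^{n−i}`. -/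
theorem onemax_expected_progress_upper
    {n : ℕ} (p : ℝ) (hp : 0 < p) (hp1 : p < 1) (x : Fin n → Bool) :
    ∑ y : Fin n → Bool,
        mutP p x y * ((oneCount x : ℝ) - (min (oneCount x) (oneCount y) : ℕ)) ≤
      (oneCount x : ℝ) * p *
        (1 - p + (oneCount x : ℝ) * p ^ 2 / (1 - p)) ^ (n - oneCount x) := by
  have hq : 0 < 1 - p := by linarith
  have hcompl : #(ones x)ᶜ = n - oneCount x := by
    rw [card_compl, Fintype.card_fin, oneCount_eq_card_ones]
  rw [sum_mutP_mul_oneCount_sub_min_eq, oneCount_eq_card_ones]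
  calc _ ≤ ∑ B ∈ (ones x)ᶜ.powerset, p ^ #B * (1 - p) ^ (#(ones x)ᶜ - #B) *
          (#(ones x) * p * (#(ones x) * p) ^ #B) := by
        gcongr with B
        rw [sum_powerset_apply_card
          fun a => p ^ a * (1 - p) ^ (#(ones x) - a) * ((a - #B : ℕ) : ℝ)]
        simpa only [nsmul_eq_mul, mul_assoc] using
          sum_choose_mul_pow_mul_pow_mul_tsub_le hp.le hp1.le #(ones x) #B
    _ = #(ones x) * p * (#(ones x) * p ^ 2 + (1 - p)) ^ #(ones x)ᶜ := by
        rw [← sum_pow_mul_eq_add_pow, mul_sum]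
        exact sum_congr rfl fun B _ => by ring
    _ ≤ _ := by
        rw [hcompl, add_comm, oneCount_eq_card_ones]
        gcongr
        exact le_div_self (by positivity) hq (by linarith)
end

section
/- The single-step drift decomposition bound: In the proof of the expected progress bound, for a search point with i one-bits and n−i zero-bits under mutation probability p, the sum over k ≥ 1 and j ≥ 0 of k·C(i,k+j)·C(n−i,j)·p^{k+2j}·(1−p)^{n−k−2j} is at most [Σ_{k=1}^{i} k·C(i,k)·p^k·(1−p)^{n−k}] · [Σ_{j=0}^{n−i} i^j·C(n−i,j)·(p/(1−p))^{2j}], which equals (1−p)^{n−i}·i·p·(1 + i·(p/(1−p))²)^{n−i}. -/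
/-!
Write `n = i + m`. Wherever the binomial coefficients are nonzero we have `k + 2j ≤ n`, so
`p^(k+2j) (1-p)^(n-k-2j) = p^k (1-p)^(n-k) (p/(1-p))^(2j)`, and `C(i, k+j) ≤ C(i, k) i^j`;
hence the double sum is dominated termwise by the expanded product.
-/

open Finset

theorem Nat.choose_add_le_mul_pow (n k j : ℕ) : n.choose (k + j) ≤ n.choose k * n ^ j := by
  induction j with
  | zero => simp
  | succ j ih =>
    calc n.choose (k + (j + 1)) ≤ n.choose (k + j + 1) * (k + j + 1) :=
          Nat.le_mul_of_pos_right _ (Nat.succ_pos _)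
      _ = n.choose (k + j) * (n - (k + j)) := Nat.choose_succ_right_eq _ _
      _ ≤ n.choose k * n ^ j * n := Nat.mul_le_mul ih (Nat.sub_le _ _)
      _ = n.choose k * n ^ (j + 1) := by ring

theorem sum_Icc_mul_choose_mul_pow_mul_one_sub_pow {R : Type*} [CommRing R] (n : ℕ) (x : R) :
    ∑ k ∈ Icc 1 n, (k : R) * n.choose k * x ^ k * (1 - x) ^ (n - k) = n * x := by
  have hmean := congrArg (Polynomial.eval x) (bernsteinPolynomial.sum_smul R n)
  simp only [Polynomial.eval_finsetSum, bernsteinPolynomial,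
    Polynomial.eval_mul, Polynomial.eval_pow, Polynomial.eval_sub, Polynomial.eval_one,
    Polynomial.eval_X, Polynomial.eval_natCast, nsmul_eq_mul] at hmean
  have hsub : Icc 1 n ⊆ range (n + 1) := fun k hk => by grind
  rw [← hmean, ← sum_subset hsub fun k _ hk => by
    obtain rfl : k = 0 := by grind
    simp]
  exact sum_congr rfl fun k _ => by ring

theorem sum_range_pow_mul_choose_mul_pow_two_mul (m : ℕ) {R : Type*} [CommSemiring R] (a b : R) :
    ∑ j ∈ range (m + 1), a ^ j * m.choose j * b ^ (2 * j) = (1 + a * b ^ 2) ^ m := by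
  rw [add_comm (1 : R), add_pow]
  exact sum_congr rfl fun j _ => by ring

theorem mul_choose_add_mul_pow_le {i m k j : ℕ} {p : ℝ} (hp : 0 ≤ p) (hp1 : p < 1) :
    (k : ℝ) * i.choose (k + j) * m.choose j * p ^ (k + 2 * j) * (1 - p) ^ (i + m - k - 2 * j) ≤
      (k * i.choose k * p ^ k * (1 - p) ^ (i + m - k)) *
        (i ^ j * m.choose j * (p / (1 - p)) ^ (2 * j)) := by
  have hq : 0 < 1 - p := by linarith
  by_cases h : k + j ≤ i ∧ j ≤ m
  · have hsplit : (1 - p) ^ (i + m - k) = (1 - p) ^ (i + m - k - 2 * j) * (1 - p) ^ (2 * j) := by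
      rw [← pow_add]; congr 1; omega
    have hchoose : (i.choose (k + j) : ℝ) ≤ i.choose k * i ^ j := by
      exact_mod_cast Nat.choose_add_le_mul_pow i k j
    rw [hsplit, div_pow, pow_add]
    calc _ ≤ (k : ℝ) * (i.choose k * i ^ j) * m.choose j * (p ^ k * p ^ (2 * j)) *
          (1 - p) ^ (i + m - k - 2 * j) := by gcongr
      _ = _ := by field_simp
  · rcases not_and_or.1 h with h | h
    · rw [Nat.choose_eq_zero_of_lt (by omega : i < k + j)]
      simp only [Nat.cast_zero, mul_zero, zero_mul]
      positivity
    · rw [Nat.choose_eq_zero_of_lt (by omega : m < j)]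
      simp

theorem sum_Icc_mul_choose_mul_pow_mul_one_sub_pow_add (i m : ℕ) (p : ℝ) :
    ∑ k ∈ Icc 1 i, (k : ℝ) * i.choose k * p ^ k * (1 - p) ^ (i + m - k) = (1 - p) ^ m * i * p := by
  rw [mul_assoc, ← sum_Icc_mul_choose_mul_pow_mul_one_sub_pow, mul_sum]
  refine sum_congr rfl fun k hk => ?_
  rw [show i + m - k = m + (i - k) by grind, pow_add]
  ring

theorem single_step_drift_decomposition_general
    (n i : ℕ) (hin : i ≤ n) (p : ℝ) (hp : 0 < p) (hp1 : p < 1) :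
    (∑ k ∈ Finset.Icc 1 i, ∑ j ∈ Finset.range (n + 1),
        (k : ℝ) * (i.choose (k + j)) * ((n - i).choose j) *
          p ^ (k + 2 * j) * (1 - p) ^ (n - k - 2 * j)) ≤
      (∑ k ∈ Finset.Icc 1 i, (k : ℝ) * (i.choose k) * p ^ k * (1 - p) ^ (n - k)) *
        (∑ j ∈ Finset.range (n - i + 1),
          (i : ℝ) ^ j * ((n - i).choose j) * (p / (1 - p)) ^ (2 * j)) ∧
    (∑ k ∈ Finset.Icc 1 i, (k : ℝ) * (i.choose k) * p ^ k * (1 - p) ^ (n - k)) *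
        (∑ j ∈ Finset.range (n - i + 1),
          (i : ℝ) ^ j * ((n - i).choose j) * (p / (1 - p)) ^ (2 * j)) =
      (1 - p) ^ (n - i) * i * p * (1 + (i : ℝ) * (p / (1 - p)) ^ 2) ^ (n - i) := by
  obtain ⟨m, rfl⟩ := Nat.exists_eq_add_of_le hin
  rw [Nat.add_sub_cancel_left]
  refine ⟨?_, by rw [sum_Icc_mul_choose_mul_pow_mul_one_sub_pow_add,
    sum_range_pow_mul_choose_mul_pow_two_mul]⟩
  rw [sum_mul_sum]
  gcongr with k
  have hsub : range (m + 1) ⊆ range (i + m + 1) := range_subset_range.2 (by omega)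
  calc _ ≤ ∑ j ∈ range (i + m + 1), (k * i.choose k * p ^ k * (1 - p) ^ (i + m - k)) *
          ((i : ℝ) ^ j * m.choose j * (p / (1 - p)) ^ (2 * j)) :=
        sum_le_sum fun j _ => mul_choose_add_mul_pow_le hp.le hp1
    _ = _ := (sum_subset hsub fun j _ hj => by
        rw [Nat.choose_eq_zero_of_lt (n := m) (k := j) (by grind)]
        simp).symm

/-- Single-step drift decomposition bound: the double sum over `k ≥ 1`, `j ≥ 0` of
`k·C(i,k+j)·C(n−i,j)·p^{k+2j}·(1−p)^{n−k−2j}` is at most the product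
`S₁ · S₂`, which evaluates to `(1−p)^{n−i}·i·p·(1 + i·(p/(1−p))²)^{n−i}`. -/
theorem single_step_drift_decomposition
    (n i : ℕ) (hi1 : 1 ≤ i) (hin : i ≤ n) (p : ℝ) (hp : 0 < p) (hp1 : p < 1) :
    (∑ k ∈ Finset.Icc 1 i, ∑ j ∈ Finset.range (n + 1),
        (k : ℝ) * (i.choose (k + j)) * ((n - i).choose j) *
          p ^ (k + 2 * j) * (1 - p) ^ (n - k - 2 * j)) ≤
      (∑ k ∈ Finset.Icc 1 i, (k : ℝ) * (i.choose k) * p ^ k * (1 - p) ^ (n - k)) *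
        (∑ j ∈ Finset.range (n - i + 1),
          (i : ℝ) ^ j * ((n - i).choose j) * (p / (1 - p)) ^ (2 * j)) ∧
    (∑ k ∈ Finset.Icc 1 i, (k : ℝ) * (i.choose k) * p ^ k * (1 - p) ^ (n - k)) *
        (∑ j ∈ Finset.range (n - i + 1),
          (i : ℝ) ^ j * ((n - i).choose j) * (p / (1 - p)) ^ (2 * j)) =
      (1 - p) ^ (n - i) * i * p * (1 + (i : ℝ) * (p / (1 - p)) ^ 2) ^ (n - i) :=
  single_step_drift_decomposition_general n i hin p hp hp1
end

section
/- Superpolynomial lower bound for large mutation probability: For any linear function with a unique optimum, the optimization time of any mutation-based EA with polynomial population size μ and mutation probability p = Ω(n^{ε−1}) for a constant ε > 0 is at least 2^{Ω(n^ε)} with probability 1 − 2^{−Ω(n^ε)}. -/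
open MeasureTheory
open scoped ENNReal BigOperators

/-- First point in time at which the process `x` hits the point `z`, as a value
in `ℝ≥0∞` (it is `⊤` if `z` is never reached). -/
noncomputable def hitT {n : ℕ} {Ω : Type*} (x : ℕ → Ω → (Fin n → Bool))
    (z : Fin n → Bool) (ω : Ω) : ℝ≥0∞ :=
  ⨅ (t : ℕ) (_ : x t ω = z), (t : ℝ≥0∞)

/-- `x` is the trajectory of a mutation-based EA with population size `μpop`,
mutation probability `p`, and (history-dependent, randomized) parent-selection
distribution `sel`: the first `μpop` points are independent and uniform, and
given the history, the next point is obtained by bit-flip mutation (with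
probability `p` per bit) of a parent chosen among the history according to
`sel`. -/
def IsMutationBasedEA {n : ℕ} {Ω : Type*} [MeasurableSpace Ω] (μ : Measure Ω)
    (p : ℝ) (μpop : ℕ) (sel : ℕ → (ℕ → (Fin n → Bool)) → ℕ → ℝ)
    (x : ℕ → Ω → (Fin n → Bool)) : Prop :=
  (∀ h : ℕ → (Fin n → Bool),
      (μ {ω | ∀ i < μpop, x i ω = h i}).toReal = ((1 : ℝ) / 2) ^ (n * μpop)) ∧
  (∀ t h, (∀ i, 0 ≤ sel t h i) ∧ ∑ i ∈ Finset.range (t + 1), sel t h i = 1) ∧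
  (∀ t, μpop ≤ t + 1 → ∀ (h : ℕ → (Fin n → Bool)) (y : Fin n → Bool),
      (μ {ω | (∀ i ≤ t, x i ω = h i) ∧ x (t + 1) ω = y}).toReal =
        (μ {ω | ∀ i ≤ t, x i ω = h i}).toReal *
          ∑ i ∈ Finset.range (t + 1), sel t h i * mutP p (h i) y)

/-!
Whatever the parent selection does, every point after the initial population is a bit-flip
mutation of an earlier point, and mutation with `p ≤ 1/2` produces any fixed string with
probability at most `(1 - p)^n`; a uniform initial point does so with probability
`2^{-n} ≤ (1 - p)^n`. Hence `P(x_t = 0) ≤ (1 - p)^n ≤ exp(-pn) ≤ exp(-c n^ε)` for every `t`,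
and a union bound over the first `2^{γ n^ε}` steps gives the claim.
-/

lemma mutP_eq_prod {n : ℕ} (p : ℝ) (x y : Fin n → Bool) :
    mutP p x y = ∏ i, if x i = y i then 1 - p else p := by
  classical
  have hcard : (Finset.univ.filter fun i => x i = y i).card = n - hamDist x y := by
    have := Finset.card_filter_add_card_filter_not (s := Finset.univ)
      (fun i : Fin n => x i = y i)
    rw [Finset.card_univ, Fintype.card_fin] at this
    simp only [hamDist, ne_eq] at this ⊢
    omega
  rw [Finset.prod_ite, Finset.prod_const, Finset.prod_const, hcard, mutP, mul_comm]
  rfl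

lemma sum_mutP {n : ℕ} (p : ℝ) (x : Fin n → Bool) : ∑ y, mutP p x y = 1 := by
  simp_rw [mutP_eq_prod]
  rw [← Fintype.prod_sum fun i b => if x i = b then 1 - p else p]
  simp only [Fintype.sum_bool]
  refine Finset.prod_eq_one fun i _ => ?_
  cases x i <;> simp

lemma mutP_le_one_sub_pow {n : ℕ} {p : ℝ} (hp0 : 0 ≤ p) (hp : p ≤ 1 / 2)
    (x y : Fin n → Bool) : mutP p x y ≤ (1 - p) ^ n := by
  calc mutP p x y = ∏ i, if x i = y i then 1 - p else p := mutP_eq_prod p x y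
    _ ≤ ∏ _i : Fin n, (1 - p) :=
      Finset.prod_le_prod (fun i _ => by split_ifs <;> linarith)
        fun i _ => by split_ifs <;> linarith
    _ = (1 - p) ^ n := by simp

section PrefixEvent

variable {V Ω : Type*}

def prefixEvent (x : ℕ → Ω → V) {m : ℕ} (g : Fin m → V) : Set Ω :=
  {ω | ∀ i : Fin m, x i ω = g i}

lemma prefixEvent_eq_extend [Inhabited V] (x : ℕ → Ω → V) {m : ℕ} (g : Fin m → V) :
    prefixEvent x g = {ω | ∀ i < m, x i ω = Function.extend Fin.val g default i} := by
  ext ω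
  refine ⟨fun h i hi => ?_, fun h i => ?_⟩
  · rw [show i = (⟨i, hi⟩ : Fin m).val from rfl, Fin.val_injective.extend_apply]
    exact h _
  · simpa [Fin.val_injective.extend_apply] using h i i.2

lemma prefixEvent_snoc (x : ℕ → Ω → V) {m : ℕ} (g : Fin m → V) (y : V) :
    prefixEvent x (Fin.snoc g y : Fin (m + 1) → V) = prefixEvent x g ∩ {ω | x m ω = y} := by
  ext ω
  simp [prefixEvent, Fin.forall_fin_succ']

variable [MeasurableSpace Ω] {μ : Measure Ω} [Fintype V]

/- The trajectory is not assumed measurable, so the masses of the histories cannot be added up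
by additivity of `μ`; their total is propagated through the transition equations instead. -/
lemma sum_measureReal_prefixEvent_snoc {x : ℕ → Ω → V} {m : ℕ}
    (K : (Fin m → V) → V → ℝ) (hK : ∀ g, ∑ y, K g y = 1)
    (hstep : ∀ g y, μ.real (prefixEvent x (Fin.snoc g y : Fin (m + 1) → V)) =
      μ.real (prefixEvent x g) * K g y) :
    ∑ g : Fin (m + 1) → V, μ.real (prefixEvent x g) =
      ∑ g : Fin m → V, μ.real (prefixEvent x g) := by
  rw [← (Fin.snocEquiv fun _ => V).sum_comp, Fintype.sum_prod_type_right]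
  simp [Fin.snocEquiv, hstep, ← Finset.mul_sum, hK]

lemma measureReal_eq_le_of_snoc [IsFiniteMeasure μ] {x : ℕ → Ω → V} {m : ℕ}
    (K : (Fin m → V) → V → ℝ)
    (hmass : ∑ g : Fin m → V, μ.real (prefixEvent x g) = 1)
    (hstep : ∀ g y, μ.real (prefixEvent x (Fin.snoc g y : Fin (m + 1) → V)) =
      μ.real (prefixEvent x g) * K g y)
    {z : V} {q : ℝ} (hKz : ∀ g, K g z ≤ q) :
    μ.real {ω | x m ω = z} ≤ q := by
  have hcover :
      {ω | x m ω = z} ⊆ ⋃ g : Fin m → V, prefixEvent x (Fin.snoc g z : Fin (m + 1) → V) :=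
    fun ω hω => Set.mem_iUnion.2
      ⟨fun i => x i ω, by rw [prefixEvent_snoc]; exact ⟨fun i => rfl, hω⟩⟩
  calc μ.real {ω | x m ω = z}
      ≤ ∑ g : Fin m → V, μ.real (prefixEvent x (Fin.snoc g z : Fin (m + 1) → V)) :=
        (measureReal_mono hcover).trans (measureReal_iUnion_fintype_le _)
    _ ≤ ∑ g : Fin m → V, μ.real (prefixEvent x g) * q := by
        simp_rw [hstep]
        gcongr with g
        exact hKz g
    _ = q := by rw [← Finset.sum_mul, hmass, one_mul]

lemma measureReal_eq_le_of_uniform [IsFiniteMeasure μ] [DecidableEq V] {x : ℕ → Ω → V} {m : ℕ}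
    (huniform : ∀ g : Fin m → V, μ.real (prefixEvent x g) = ((Fintype.card V : ℝ)⁻¹) ^ m)
    (j : Fin m) (z : V) :
    μ.real {ω | x j ω = z} ≤ (Fintype.card V : ℝ)⁻¹ := by
  have : Nonempty V := ⟨z⟩
  obtain ⟨k, rfl⟩ : ∃ k, m = k + 1 := ⟨m - 1, by have := j.isLt; omega⟩
  have hcover : {ω | x j ω = z} ⊆
      ⋃ g ∈ Finset.univ.filter fun g : Fin (k + 1) → V => g j = z, prefixEvent x g := by
    intro ω hω
    simp only [Set.mem_iUnion]
    exact ⟨fun i => x i ω, by simpa using hω, fun i => rfl⟩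
  have hcard : (Finset.univ.filter fun g : Fin (k + 1) → V => g j = z).card =
      Fintype.card V ^ k := by
    simpa using Fintype.card_filter_piFinset_const_eq_of_mem Finset.univ j (Finset.mem_univ z)
  calc μ.real {ω | x j ω = z}
      ≤ ∑ g ∈ Finset.univ.filter fun g : Fin (k + 1) → V => g j = z,
          μ.real (prefixEvent x g) :=
        (measureReal_mono hcover (measure_ne_top _ _)).trans (measureReal_biUnion_finset_le _ _)
    _ = (Fintype.card V : ℝ) ^ k * ((Fintype.card V : ℝ)⁻¹) ^ (k + 1) := by
        simp [Finset.sum_congr rfl fun g _ => huniform g, hcard]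
    _ = (Fintype.card V : ℝ)⁻¹ := by
        have hV : (Fintype.card V : ℝ) ≠ 0 := by exact_mod_cast Fintype.card_ne_zero
        rw [pow_succ, ← mul_assoc, ← mul_pow, mul_inv_cancel₀ hV, one_pow, one_mul]

end PrefixEvent

noncomputable def offspringProb {n : ℕ} (p : ℝ) (sel : ℕ → (ℕ → (Fin n → Bool)) → ℕ → ℝ)
    (t : ℕ) (h : ℕ → (Fin n → Bool)) (y : Fin n → Bool) : ℝ :=
  ∑ i ∈ Finset.range (t + 1), sel t h i * mutP p (h i) y

section OffspringProb

variable {n t : ℕ} {p : ℝ} {sel : ℕ → (ℕ → (Fin n → Bool)) → ℕ → ℝ} {h : ℕ → (Fin n → Bool)}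

lemma sum_offspringProb (hsel : ∑ i ∈ Finset.range (t + 1), sel t h i = 1) :
    ∑ y, offspringProb p sel t h y = 1 := by
  simp_rw [offspringProb, Finset.sum_comm (γ := Fin n → Bool), ← Finset.mul_sum, sum_mutP,
    mul_one, hsel]

lemma offspringProb_le (hsel0 : ∀ i, 0 ≤ sel t h i)
    (hsel : ∑ i ∈ Finset.range (t + 1), sel t h i = 1) (hp0 : 0 ≤ p) (hp : p ≤ 1 / 2)
    (y : Fin n → Bool) : offspringProb p sel t h y ≤ (1 - p) ^ n :=
  calc offspringProb p sel t h y
      ≤ ∑ i ∈ Finset.range (t + 1), sel t h i * (1 - p) ^ n :=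
        Finset.sum_le_sum fun i _ =>
          mul_le_mul_of_nonneg_left (mutP_le_one_sub_pow hp0 hp _ _) (hsel0 i)
    _ = (1 - p) ^ n := by rw [← Finset.sum_mul, hsel, one_mul]

end OffspringProb

namespace IsMutationBasedEA

variable {n μpop : ℕ} {Ω : Type*} [MeasurableSpace Ω] {μ : Measure Ω} {p : ℝ}
  {sel : ℕ → (ℕ → (Fin n → Bool)) → ℕ → ℝ} {x : ℕ → Ω → (Fin n → Bool)}

lemma measureReal_prefixEvent_init (hEA : IsMutationBasedEA μ p μpop sel x)
    (g : Fin μpop → (Fin n → Bool)) :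
    μ.real (prefixEvent x g) = ((Fintype.card (Fin n → Bool) : ℝ)⁻¹) ^ μpop := by
  rw [prefixEvent_eq_extend, Measure.real, hEA.1]
  simp [pow_mul]

lemma sum_measureReal_prefixEvent_init (hEA : IsMutationBasedEA μ p μpop sel x) :
    ∑ g : Fin μpop → (Fin n → Bool), μ.real (prefixEvent x g) = 1 := by
  simp [hEA.measureReal_prefixEvent_init]

lemma measureReal_prefixEvent_snoc (hEA : IsMutationBasedEA μ p μpop sel x) {t : ℕ}
    (ht : μpop ≤ t + 1) (g : Fin (t + 1) → (Fin n → Bool)) (y : Fin n → Bool) :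
    μ.real (prefixEvent x (Fin.snoc g y : Fin (t + 2) → (Fin n → Bool))) =
      μ.real (prefixEvent x g) * offspringProb p sel t (Function.extend Fin.val g default) y := by
  rw [prefixEvent_snoc, prefixEvent_eq_extend]
  simp only [Nat.lt_succ_iff]
  exact hEA.2.2 t ht _ y

lemma sum_measureReal_prefixEvent (hEA : IsMutationBasedEA μ p μpop sel x) (hμpop : 1 ≤ μpop)
    {m : ℕ} (hm : μpop ≤ m + 1) :
    ∑ g : Fin (m + 1) → (Fin n → Bool), μ.real (prefixEvent x g) = 1 := by
  induction m with
  | zero =>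
    obtain rfl : μpop = 1 := by omega
    exact hEA.sum_measureReal_prefixEvent_init
  | succ m ih =>
    rcases Nat.lt_or_ge (m + 1) μpop with hlt | hle
    · obtain rfl : μpop = m + 2 := by omega
      exact hEA.sum_measureReal_prefixEvent_init
    · rw [sum_measureReal_prefixEvent_snoc _ (fun g => sum_offspringProb (hEA.2.1 m _).2)
        (hEA.measureReal_prefixEvent_snoc hle), ih hle]

lemma measureReal_eq_le [IsFiniteMeasure μ] (hEA : IsMutationBasedEA μ p μpop sel x)
    (hμpop : 1 ≤ μpop) (hp0 : 0 ≤ p) (hp : p ≤ 1 / 2) (t : ℕ) (z : Fin n → Bool) :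
    μ.real {ω | x t ω = z} ≤ (1 - p) ^ n := by
  rcases Nat.lt_or_ge t μpop with hinit | hmut
  · calc μ.real {ω | x t ω = z}
        ≤ (Fintype.card (Fin n → Bool) : ℝ)⁻¹ :=
          measureReal_eq_le_of_uniform hEA.measureReal_prefixEvent_init ⟨t, hinit⟩ z
      _ = (1 / 2) ^ n := by simp
      _ ≤ (1 - p) ^ n := pow_le_pow_left₀ (by norm_num) (by linarith) n
  · obtain ⟨s, rfl⟩ : ∃ s, t = s + 1 := ⟨t - 1, by omega⟩
    exact measureReal_eq_le_of_snoc _ (hEA.sum_measureReal_prefixEvent hμpop hmut)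
      (hEA.measureReal_prefixEvent_snoc hmut)
      fun g => offspringProb_le (hEA.2.1 s _).1 (hEA.2.1 s _).2 hp0 hp z

end IsMutationBasedEA

lemma measureReal_hitT_lt_le {n : ℕ} {Ω : Type*} [MeasurableSpace Ω] {μ : Measure Ω}
    [IsFiniteMeasure μ] {x : ℕ → Ω → (Fin n → Bool)} {z : Fin n → Bool} {q : ℝ}
    (hq : ∀ t, μ.real {ω | x t ω = z} ≤ q) (R : ℝ) :
    μ.real {ω | hitT x z ω < ENNReal.ofReal R} ≤ ⌈R⌉₊ * q := by
  have hcover : {ω | hitT x z ω < ENNReal.ofReal R} ⊆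
      ⋃ t ∈ Finset.range ⌈R⌉₊, {ω | x t ω = z} := by
    intro ω hω
    obtain ⟨t, hω⟩ := iInf_lt_iff.1 (show hitT x z ω < ENNReal.ofReal R from hω)
    obtain ⟨hxt, htR⟩ := iInf_lt_iff.1 hω
    exact Set.mem_biUnion (Finset.mem_range.2 (Nat.lt_ceil.2 (ENNReal.natCast_lt_ofReal.1 htR)))
      hxt
  calc μ.real {ω | hitT x z ω < ENNReal.ofReal R}
      ≤ ∑ t ∈ Finset.range ⌈R⌉₊, μ.real {ω | x t ω = z} :=
        (measureReal_mono hcover (measure_ne_top _ _)).trans (measureReal_biUnion_finset_le _ _)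
    _ ≤ ∑ _t ∈ Finset.range ⌈R⌉₊, q := Finset.sum_le_sum fun t _ => hq t
    _ = ⌈R⌉₊ * q := by simp

lemma natCeil_two_rpow_mul_one_sub_pow_le {n : ℕ} {p a : ℝ} (ha : 1 / 2 ≤ a)
    (hpn : 4 * a ≤ p * n) (hp : p ≤ 1) :
    ⌈(2 : ℝ) ^ a⌉₊ * (1 - p) ^ n ≤ (2 : ℝ) ^ (-a) := by
  have hceil : (⌈(2 : ℝ) ^ a⌉₊ : ℝ) ≤ 2 * 2 ^ a := by
    refine Nat.ceil_le_two_mul ?_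
    have : (1 : ℝ) ≤ 2 ^ a := Real.one_le_rpow (by norm_num) (by linarith)
    linarith
  have hexp : (1 - p) ^ n ≤ Real.exp (-(4 * a)) :=
    calc (1 - p) ^ n ≤ Real.exp (-p) ^ n :=
          pow_le_pow_left₀ (by linarith) (Real.one_sub_le_exp_neg p) n
      _ = Real.exp (-(p * n)) := by rw [← Real.exp_nat_mul]; ring_nf
      _ ≤ Real.exp (-(4 * a)) := Real.exp_le_exp.2 (by linarith)
  have hlog : Real.log 2 ≤ 1 := by
    linarith [Real.log_le_sub_one_of_pos (by norm_num : (0 : ℝ) < 2)]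
  have hlog0 : 0 ≤ Real.log 2 := Real.log_nonneg (by norm_num)
  calc (⌈(2 : ℝ) ^ a⌉₊ : ℝ) * (1 - p) ^ n ≤ 2 * 2 ^ a * Real.exp (-(4 * a)) :=
        mul_le_mul hceil hexp (by positivity) (by positivity)
    _ = Real.exp (Real.log 2 + Real.log 2 * a - 4 * a) := by
        rw [Real.rpow_def_of_pos two_pos, Real.exp_sub, Real.exp_add, Real.exp_log two_pos,
          Real.exp_neg]
        ring
    _ ≤ Real.exp (Real.log 2 * -a) := Real.exp_le_exp.2 (by nlinarith)
    _ = (2 : ℝ) ^ (-a) := (Real.rpow_def_of_pos two_pos _).symm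

/-- On any linear function (with positive weights, so that the all-zeros string
is the unique optimum), every mutation-based EA with polynomial population size
and mutation probability `p = Ω(n^{ε−1})` needs time at least `2^{Ω(n^ε)}` with
probability `1 − 2^{−Ω(n^ε)}`. -/
theorem lower_bound_large_mutation_probability :
    ∀ ε : ℝ, 0 < ε → ∀ c c' : ℝ, 0 < c → 0 < c' →
    ∃ γ : ℝ, 0 < γ ∧ ∃ N : ℕ, ∀ n : ℕ, N ≤ n →
    ∀ p : ℝ, c * (n : ℝ) ^ (ε - 1) ≤ p → p ≤ 1 / 2 →
    ∀ μpop : ℕ, 1 ≤ μpop → (μpop : ℝ) ≤ (n : ℝ) ^ c' →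
    ∀ w : Fin n → ℝ, (∀ i, 0 < w i) →
    ∀ (Ω : Type) (_ : MeasurableSpace Ω) (μ : Measure Ω), IsProbabilityMeasure μ →
    ∀ (sel : ℕ → (ℕ → (Fin n → Bool)) → ℕ → ℝ) (x : ℕ → Ω → (Fin n → Bool)),
    IsMutationBasedEA μ p μpop sel x →
    μ {ω | hitT x (fun _ => false) ω < ENNReal.ofReal ((2 : ℝ) ^ (γ * (n : ℝ) ^ ε))} ≤
      ENNReal.ofReal ((2 : ℝ) ^ (-(γ * (n : ℝ) ^ ε))) := by
  intro ε hε c _ hc _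
  obtain ⟨N, hN⟩ := Filter.eventually_atTop.1 <|
    ((tendsto_rpow_atTop hε).comp tendsto_natCast_atTop_atTop).eventually_ge_atTop (2 / c)
  refine ⟨c / 4, by positivity, N + 1, fun n hn p hpc hp μpop hμpop _ _ _ Ω _ μ _ sel x hEA => ?_⟩
  have hn0 : (0 : ℝ) < n := by exact_mod_cast (show 0 < n by omega)
  have hcn : 2 ≤ c * (n : ℝ) ^ ε := by
    have : 2 / c ≤ (n : ℝ) ^ ε := hN n (by omega)
    rwa [div_le_iff₀ hc, mul_comm] at this
  have hp0 : 0 ≤ p := (by positivity : 0 ≤ c * (n : ℝ) ^ (ε - 1)).trans hpc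
  have hpn : c * (n : ℝ) ^ ε ≤ p * n :=
    calc c * (n : ℝ) ^ ε = c * (n : ℝ) ^ (ε - 1) * n := by
          rw [mul_assoc, ← Real.rpow_add_one hn0.ne', sub_add_cancel]
      _ ≤ p * n := by gcongr
  rw [← ofReal_measureReal]
  refine ENNReal.ofReal_le_ofReal <| (measureReal_hitT_lt_le
    (fun t => hEA.measureReal_eq_le hμpop hp0 hp t _) _).trans ?_
  exact natCeil_two_rpow_mul_one_sub_pow_le (by linarith) (by linarith) (by linarith)
end
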